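/- Assume 4R·ω_g·T̃_m ≥ −V² and let i_f ∈ I_f. If for some j ∈ {1,2} every complex eigenvalue of the Jacobian matrix A_j of F at x_jᵉ has strictly negative real part, then sin(δ_jᵉ + φ) > 0; consequently δ_jᵉ = δ₁ᵉ and δ₁ᵉ ∈ (−φ, π − φ). -/

import Mathlib

/-!
If every complex eigenvalue of a real `n × n` matrix `A` has negative real part, the monic
polynomial `charpoly A` has no root in `[0, ∞)`, so it is positive at `0`, i.e.
`(-1)^n det A > 0`. In dimension four this makes the determinant of the
Jacobian positive, and that determinant is `m i_f V / (J L) · (R/L · sin δ + ω_g cos δ)`, a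
positive multiple of `sin (δ + φ)`. At `δ₂ᵉ` this sine is `-sin (arccos Λ) ≤ 0`, which rules
`δ₂ᵉ` out.
-/

open Real Polynomial

theorem Polynomial.Monic.eval_zero_pos_of_forall_nonneg_ne_zero {P : ℝ[X]} (hP : P.Monic)
    (hroot : ∀ r, 0 ≤ r → P.eval r ≠ 0) : 0 < P.eval 0 := by
  rcases Nat.eq_zero_or_pos P.natDegree with hdeg | hdeg
  · simp [hP.natDegree_eq_zero.mp hdeg]
  have htend : Filter.Tendsto P.eval Filter.atTop Filter.atTop :=
    P.tendsto_atTop_of_leadingCoeff_nonneg (natDegree_pos_iff_degree_pos.mp hdeg)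
      (by simp [hP.leadingCoeff])
  obtain ⟨b, hb_pos, hb⟩ :=
    ((htend.eventually_gt_atTop 0).and (Filter.eventually_ge_atTop (0 : ℝ))).exists
  by_contra! h0
  obtain ⟨c, hc, hc0⟩ := intermediate_value_Icc hb P.continuous.continuousOn ⟨h0, hb_pos.le⟩
  exact hroot c hc.1 hc0

namespace Matrix

variable {n : Type*} [Fintype n] [DecidableEq n]

theorem det_neg_pos_of_spectrum_re_neg (A : Matrix n n ℝ)
    (hA : ∀ μ ∈ spectrum ℂ (A.map (Complex.ofReal ·)), μ.re < 0) : 0 < (-A).det := by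
  have hroot : ∀ r : ℝ, 0 ≤ r → A.charpoly.eval r ≠ 0 := fun r hr hr0 => by
    have hmem : (r : ℂ) ∈ spectrum ℂ (A.map (Complex.ofReal ·)) := by
      refine mem_spectrum_of_isRoot_charpoly ?_
      rw [IsRoot, show A.map (Complex.ofReal ·) = A.map Complex.ofRealHom from rfl,
        charpoly_map, eval_map]
      exact (eval₂_at_apply Complex.ofRealHom r).trans (by rw [hr0, map_zero])
    simpa using (hA _ hmem).trans_le hr
  rw [det_neg, det_eq_sign_charpoly_coeff, coeff_zero_eq_eval_zero, ← mul_assoc, ← pow_add,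
    Even.neg_one_pow ⟨_, rfl⟩, one_mul]
  exact A.charpoly_monic.eval_zero_pos_of_forall_nonneg_ne_zero hroot

variable {𝕜 : Type*} [NontriviallyNormedField 𝕜] [CompleteSpace 𝕜] {m : Type*}

theorem eq_of_hasFDerivAt_mulVecLin {f : (n → 𝕜) → m → 𝕜} {x : n → 𝕜} {A B : Matrix m n 𝕜}
    (hA : HasFDerivAt f (LinearMap.toContinuousLinearMap (mulVecLin A)) x)
    (hB : HasFDerivAt f (LinearMap.toContinuousLinearMap (mulVecLin B)) x) : A = B :=
  toLin'.injective (LinearMap.toContinuousLinearMap.injective (hA.unique hB))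

end Matrix

section Synchronverter

variable (R L J m Dp V Tm ωn ωg i_f : ℝ)

noncomputable def synchronverterField (x : Fin 4 → ℝ) : Fin 4 → ℝ :=
  ![(-R * x 0 + x 2 * L * x 1 + V * sin (x 3)) / L,
    (-(x 2 * L * x 0) - R * x 1 - m * i_f * x 2 + V * cos (x 3)) / L,
    (Tm + m * i_f * x 1 - Dp * x 2 + Dp * ωn) / J,
    x 2 - ωg]

noncomputable def synchronverterJacobian (x : Fin 4 → ℝ) : Matrix (Fin 4) (Fin 4) ℝ :=
  !![-(R / L), x 2, x 1, V * cos (x 3) / L;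
     -x 2, -(R / L), -x 0 - m * i_f / L, -(V * sin (x 3)) / L;
     0, m * i_f / J, -(Dp / J), 0;
     0, 0, 1, 0]

variable {R L J m Dp V Tm ωn ωg i_f}

theorem hasFDerivAt_synchronverterField (hL : L ≠ 0) (x : Fin 4 → ℝ) :
    HasFDerivAt (synchronverterField R L J m Dp V Tm ωn ωg i_f)
      (LinearMap.toContinuousLinearMap
        (Matrix.mulVecLin (synchronverterJacobian R L J m Dp V i_f x))) x := by
  have hproj (k : Fin 4) : HasFDerivAt (fun y : Fin 4 → ℝ => y k)
      (ContinuousLinearMap.proj (R := ℝ) (φ := fun _ : Fin 4 => ℝ) k) x :=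
    (ContinuousLinearMap.proj (R := ℝ) (φ := fun _ : Fin 4 => ℝ) k).hasFDerivAt
  refine hasFDerivAt_pi'' fun k => ?_
  fin_cases k
  · refine ((((hproj 0).const_mul (-R)).add (((hproj 2).mul_const L).mul (hproj 1))).add
      ((hproj 3).sin.const_mul V) |>.mul_const L⁻¹).congr_fderiv ?_
    ext v
    simp [synchronverterJacobian, dotProduct, Fin.sum_univ_four]
    field_simp
    ring
  · refine ((((((hproj 2).mul_const L).mul (hproj 0)).neg.sub ((hproj 1).const_mul R)).sub
      ((hproj 2).const_mul (m * i_f))).add ((hproj 3).cos.const_mul V)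
        |>.mul_const L⁻¹).congr_fderiv ?_
    ext v
    simp [synchronverterJacobian, dotProduct, Fin.sum_univ_four]
    field_simp
    ring
  · refine (((((hproj 1).const_mul (m * i_f)).const_add Tm).sub
      ((hproj 2).const_mul Dp)).add_const (Dp * ωn) |>.mul_const J⁻¹).congr_fderiv ?_
    ext v
    simp [synchronverterJacobian, dotProduct, Fin.sum_univ_four]
    ring
  · refine ((hproj 2).sub_const ωg).congr_fderiv ?_
    ext v
    simp [synchronverterJacobian, dotProduct, Fin.sum_univ_four]

theorem det_synchronverterJacobian (x : Fin 4 → ℝ) :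
    (synchronverterJacobian R L J m Dp V i_f x).det =
      m * i_f * V / (J * L) * (R / L * sin (x 3) + x 2 * cos (x 3)) := by
  simp [synchronverterJacobian, Matrix.det_succ_row_zero, Fin.sum_univ_succ, Fin.succAbove]
  ring

end Synchronverter

theorem Real.sin_add_pos_of_tan_eq {a b φ δ : ℝ} (ha : 0 < a) (hφ : 0 < cos φ)
    (htan : tan φ = b / a) (h : 0 < a * sin δ + b * cos δ) : 0 < sin (δ + φ) := by
  have hsinφ : sin φ = b / a * cos φ := by rw [← htan, tan_mul_cos hφ.ne']
  have key : a * sin (δ + φ) = cos φ * (a * sin δ + b * cos δ) := by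
    rw [sin_add, hsinφ]
    field_simp
  exact pos_of_mul_pos_right (key ▸ mul_pos hφ h) ha.le

theorem Real.arccos_mem_Ioo_of_sin_pos {y : ℝ} (h : 0 < sin (arccos y)) :
    arccos y ∈ Set.Ioo 0 π := by
  refine ⟨(arccos_nonneg y).lt_of_ne ?_, (arccos_le_pi y).lt_of_ne ?_⟩ <;> rintro heq
  · rw [← heq, sin_zero] at h
    exact h.false
  · rw [heq, sin_pi] at h
    exact h.false
theorem stmt_6_general
    (R L J m Dp V ωg ωn Tm : ℝ)
    (hR : 0 < R) (hL : 0 < L) (hJ : 0 < J) (hm : 0 < m)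
    (hV : 0 < V)
    (Tt p φ : ℝ)
    (hφ : φ ∈ Set.Ioo 0 (π / 2)) (hφtan : Real.tan φ = ωg * L / R)
    (Λ : ℝ → ℝ)
    (If : Set ℝ) (hIf : If = {i : ℝ | 0 < i ∧ |Λ i| ≤ 1})
    (i_f : ℝ) (hif : i_f ∈ If)
    (δ1 δ2 iqe : ℝ)
    (hδ1 : δ1 = Real.arccos (Λ i_f) - φ)
    (hδ2 : δ2 = -Real.arccos (Λ i_f) - φ)
    (F : (Fin 4 → ℝ) → Fin 4 → ℝ)
    (hF : ∀ x : Fin 4 → ℝ, F x =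
      ![(-R * x 0 + x 2 * L * x 1 + V * Real.sin (x 3)) / L,
        (-(x 2 * L * x 0) - R * x 1 - m * i_f * x 2 + V * Real.cos (x 3)) / L,
        (Tm + m * i_f * x 1 - Dp * x 2 + Dp * ωn) / J,
        x 2 - ωg]) :
    ∀ δe ∈ ({δ1, δ2} : Set ℝ), ∀ A : Matrix (Fin 4) (Fin 4) ℝ,
      HasFDerivAt F (LinearMap.toContinuousLinearMap (Matrix.mulVecLin A))
        ![-(Tt * ωg / (m * i_f * p)) + V * Real.sin δe / R, iqe, ωg, δe] →
      (∀ μ ∈ spectrum ℂ (A.map (Complex.ofReal ·)), μ.re < 0) →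
      (0 < Real.sin (δe + φ) ∧ δe = δ1 ∧ δ1 ∈ Set.Ioo (-φ) (π - φ)) := by
  intro δe hδe A hdA hspec
  obtain ⟨hif_pos, -⟩ : 0 < i_f ∧ |Λ i_f| ≤ 1 := by rwa [hIf] at hif
  have hA : A = synchronverterJacobian R L J m Dp V i_f
      ![-(Tt * ωg / (m * i_f * p)) + V * sin δe / R, iqe, ωg, δe] :=
    Matrix.eq_of_hasFDerivAt_mulVecLin hdA (by
      rw [funext hF]
      exact hasFDerivAt_synchronverterField (Tm := Tm) (ωn := ωn) (ωg := ωg) hL.ne' _)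
  have hdet : 0 < m * i_f * V / (J * L) * (R / L * sin δe + ωg * cos δe) := by
    have := Matrix.det_neg_pos_of_spectrum_re_neg A hspec
    rwa [Matrix.det_neg, Fintype.card_fin, Even.neg_one_pow (by decide), one_mul, hA,
      det_synchronverterJacobian] at this
  have hsin : 0 < sin (δe + φ) :=
    sin_add_pos_of_tan_eq (div_pos hR hL) (cos_pos_of_mem_Ioo ⟨by linarith [hφ.1, pi_pos], hφ.2⟩)
      (by rw [hφtan, div_div_eq_mul_div]) (pos_of_mul_pos_right hdet (by positivity))
  rcases hδe with rfl | rfl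
  · have hmem := arccos_mem_Ioo_of_sin_pos (by rwa [hδ1, sub_add_cancel] at hsin)
    exact ⟨hsin, rfl, by rw [hδ1]; constructor <;> linarith [hmem.1, hmem.2]⟩
  · rw [hδ2, sub_add_cancel, sin_neg] at hsin
    linarith [sin_nonneg_of_nonneg_of_le_pi (arccos_nonneg (Λ i_f)) (arccos_le_pi (Λ i_f))]

/-- Assume `4R·ωg·T̃m ≥ −V²` and let `i_f ∈ I_f`. If for some `j ∈ {1,2}` every
complex eigenvalue of the Jacobian matrix `A_j` of `F` at `x_jᵉ` has strictly negative real
part, then `sin(δ_jᵉ + φ) > 0`; consequently `δ_jᵉ = δ₁ᵉ` and `δ₁ᵉ ∈ (−φ, π − φ)`. -/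
theorem stmt_6
    (R L J m Dp V ωg ωn Tm : ℝ)
    (hR : 0 < R) (hL : 0 < L) (hJ : 0 < J) (hm : 0 < m) (hDp : 0 < Dp)
    (hV : 0 < V) (hωg : 0 < ωg) (hωn : 0 < ωn)
    (Tt p φ : ℝ)
    (hTt : Tt = Tm + Dp * (ωn - ωg)) (hp : p = R / L)
    (hφ : φ ∈ Set.Ioo 0 (π / 2)) (hφtan : Real.tan φ = ωg * L / R)
    (Λ : ℝ → ℝ)
    (hΛ : ∀ i : ℝ, i ≠ 0 →
      Λ i = -(Tt / (m * i)) * (L * Real.sqrt (p ^ 2 + ωg ^ 2) / V)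
            + m * i * ωg * p / (V * Real.sqrt (p ^ 2 + ωg ^ 2)))
    (If : Set ℝ) (hIf : If = {i : ℝ | 0 < i ∧ |Λ i| ≤ 1})
    (hmain : 4 * R * ωg * Tt ≥ -V ^ 2)
    (i_f : ℝ) (hif : i_f ∈ If)
    (δ1 δ2 iqe : ℝ)
    (hδ1 : δ1 = Real.arccos (Λ i_f) - φ)
    (hδ2 : δ2 = -Real.arccos (Λ i_f) - φ)
    (hiqe : iqe = -(Tt / (m * i_f)))
    (F : (Fin 4 → ℝ) → Fin 4 → ℝ)
    (hF : ∀ x : Fin 4 → ℝ, F x =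
      ![(-R * x 0 + x 2 * L * x 1 + V * Real.sin (x 3)) / L,
        (-(x 2 * L * x 0) - R * x 1 - m * i_f * x 2 + V * Real.cos (x 3)) / L,
        (Tm + m * i_f * x 1 - Dp * x 2 + Dp * ωn) / J,
        x 2 - ωg]) :
    ∀ δe ∈ ({δ1, δ2} : Set ℝ), ∀ A : Matrix (Fin 4) (Fin 4) ℝ,
      HasFDerivAt F (LinearMap.toContinuousLinearMap (Matrix.mulVecLin A))
        ![-(Tt * ωg / (m * i_f * p)) + V * Real.sin δe / R, iqe, ωg, δe] →
      (∀ μ ∈ spectrum ℂ (A.map (Complex.ofReal ·)), μ.re < 0) →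
      (0 < Real.sin (δe + φ) ∧ δe = δ1 ∧ δ1 ∈ Set.Ioo (-φ) (π - φ)) :=
  stmt_6_general R L J m Dp V ωg ωn Tm hR hL hJ hm hV Tt p φ hφ hφtan Λ If hIf i_f hif δ1 δ2 iqe hδ1
    hδ2 F hF
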